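/- For any matrix M of rank r, the max-norm satisfies ‖M‖_max ≤ √r · ‖M‖_∞, where ‖M‖_∞ is the elementwise sup-norm. -/

import Mathlib

open scoped BigOperators

/-- Maximum ℓ₂ row norm of a matrix (the ‖·‖_{2,∞} operator norm). -/
noncomputable def rowNormMax {m k : ℕ} (U : Matrix (Fin m) (Fin k) ℝ) : ℝ :=
  ⨆ i, Real.sqrt (∑ l, (U i l) ^ 2)

/-- The max-norm: infimum over factorizations M = U Vᵀ of ‖U‖_{2,∞}‖V‖_{2,∞}. -/
noncomputable def maxNorm {d1 d2 : ℕ} (M : Matrix (Fin d1) (Fin d2) ℝ) : ℝ :=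
  sInf { x | ∃ (k : ℕ) (U : Matrix (Fin d1) (Fin k) ℝ) (V : Matrix (Fin d2) (Fin k) ℝ),
    M = U * V.transpose ∧ x = rowNormMax U * rowNormMax V }

/-- Elementwise sup-norm ‖M‖_∞. -/
noncomputable def supNorm {d1 d2 : ℕ} (M : Matrix (Fin d1) (Fin d2) ℝ) : ℝ :=
  ⨆ i, ⨆ j, |M i j|

/-- Frobenius norm. -/
noncomputable def frobNorm {d1 d2 : ℕ} (M : Matrix (Fin d1) (Fin d2) ℝ) : ℝ :=
  Real.sqrt (∑ i, ∑ j, (M i j) ^ 2)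

/-- Trace norm: the sum of the singular values of M, i.e. of the square roots of the
eigenvalues of MᵀM. -/
noncomputable def traceNorm {d1 d2 : ℕ} (M : Matrix (Fin d1) (Fin d2) ℝ) : ℝ :=
  ∑ i, Real.sqrt ((Matrix.isHermitian_conjTranspose_mul_self M).eigenvalues i)

/-!
Factor `M = U Vᵀ` through `r = rank M` with `U` injective. Among the probability weightings `c`
of the rows `uᵢ` of `U`, choose one maximising `det Q` for `Q = Uᵀ diag(c) U` (a D-optimal
design). Moving weight from `c` towards row `i` and applying the matrix determinant lemma,
maximality forces the Kiefer–Wolfowitz bound `uᵢᵀ Q⁻¹ uᵢ ≤ r`. Writing `Q = TᵀT`, the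
factorization `M = (U T⁻¹)(V Tᵀ)ᵀ` has left rows of squared length `uᵢᵀ Q⁻¹ uᵢ ≤ r` and right
rows of squared length `vⱼᵀ Q vⱼ = ∑ᵢ cᵢ Mᵢⱼ² ≤ ‖M‖∞²`.
-/

open Matrix Set Filter Topology

-- The left side equals `1` at `t = 0`, with slope `s - k` there.
theorem le_of_forall_one_sub_pow_mul_le_one {k : ℕ} {s : ℝ}
    (h : ∀ t ∈ Ioo (0 : ℝ) 1, (1 - t) ^ k * (1 + (1 - t)⁻¹ * (t * s)) ≤ 1) : s ≤ k := by
  by_contra! hks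
  have hs : 0 < s := (Nat.cast_nonneg k).trans_lt hks
  have hslope : ∀ t ∈ Ioo (0 : ℝ) 1, s - k ≤ k * (s - 1) * t := by
    rintro t ⟨ht0, ht1⟩
    have hbern : 1 - k * t ≤ (1 - t) ^ k := by
      simpa [sub_eq_add_neg] using one_add_mul_le_pow (a := -t) (by linarith) k
    have hcleared : (1 - t) ^ k * (1 - t + t * s) ≤ 1 - t := by
      have := mul_le_mul_of_nonneg_right (h t ⟨ht0, ht1⟩) (sub_nonneg.2 ht1.le)
      rwa [one_mul, mul_assoc, add_mul, one_mul, mul_comm _ (1 - t), ← mul_assoc,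
        mul_inv_cancel₀ (sub_ne_zero.2 ht1.ne'), one_mul] at this
    have := (mul_le_mul_of_nonneg_right hbern (by positivity : 0 ≤ 1 - t + t * s)).trans hcleared
    nlinarith
  have hlim : Tendsto (fun t : ℝ => k * (s - 1) * t) (𝓝[>] 0) (𝓝 0) := by
    simpa using ((continuous_const_mul ((k : ℝ) * (s - 1))).tendsto 0).mono_left
      nhdsWithin_le_nhds
  linarith [ge_of_tendsto hlim (eventually_of_mem (Ioo_mem_nhdsGT one_pos) hslope)]

namespace Matrix

section RankFactorization
variable {m n K : Type*} [Fintype m] [Fintype n] [Field K]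

theorem exists_eq_mul_transpose_injective_mulVec (M : Matrix m n K) :
    ∃ (U : Matrix m (Fin M.rank) K) (V : Matrix n (Fin M.rank) K),
      M = U * Vᵀ ∧ Function.Injective U.mulVec := by
  let W := Submodule.span K (Set.range M.col)
  let b : Module.Basis (Fin M.rank) K W :=
    Module.finBasisOfFinrankEq K W M.rank_eq_finrank_span_cols.symm
  let col (j : n) : W := ⟨M.col j, Submodule.subset_span ⟨j, rfl⟩⟩
  refine ⟨of fun i l => (b l : m → K) i, of fun j l => b.repr (col j) l, ?_, ?_⟩
  · ext i j
    have h := congrArg (fun w : W => (w : m → K) i) (b.sum_repr (col j))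
    simp only [AddSubmonoidClass.coe_finsetSum, SetLike.val_smul, Finset.sum_apply,
      Pi.smul_apply, smul_eq_mul] at h
    simpa [col, mul_apply, mul_comm] using h.symm
  · rw [mulVec_injective_iff]
    exact b.linearIndependent.map' W.subtype W.ker_subtype

end RankFactorization

section Det
variable {n K : Type*} [Fintype n] [DecidableEq n] [Field K]

theorem det_add_vecMulVec {A : Matrix n n K} (hA : IsUnit A.det) (u v : n → K) :
    (A + vecMulVec u v).det = A.det * (1 + v ⬝ᵥ A⁻¹ *ᵥ u) := by
  rw [vecMulVec_eq Unit, det_add_replicateCol_mul_replicateRow hA]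
  congr 1
  rw [det_unique]
  simp only [add_apply, one_apply_eq, mul_apply, replicateRow_apply, replicateCol_apply,
    dotProduct_mulVec]
  rfl

theorem det_smul_add_vecMulVec {A : Matrix n n K} (hA : IsUnit A.det) {a : K} (ha : a ≠ 0)
    (u v : n → K) :
    (a • A + vecMulVec u v).det =
      a ^ Fintype.card n * A.det * (1 + a⁻¹ * (v ⬝ᵥ A⁻¹ *ᵥ u)) := by
  have : a • A + vecMulVec u v = a • (A + vecMulVec (a⁻¹ • u) v) := by
    rw [smul_add, smul_vecMulVec, smul_smul, mul_inv_cancel₀ ha, one_smul]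
  rw [this, det_smul, det_add_vecMulVec hA, mulVec_smul, dotProduct_smul, smul_eq_mul, mul_assoc]

end Det

section Gram
variable {ι κ R : Type*} [Fintype ι] [DecidableEq ι] [CommRing R] (U : Matrix ι κ R)

theorem transpose_mul_diagonal_mul_eq_sum (c : ι → R) :
    Uᵀ * diagonal c * U = ∑ i, c i • vecMulVec (U i) (U i) := by
  ext k l
  simp [mul_apply, diagonal, vecMulVec, Matrix.sum_apply, mul_comm, mul_left_comm]

theorem transpose_mul_diagonal_smul_add_single_mul (c : ι → R) (a b : R) (i : ι) :
    Uᵀ * diagonal (a • c + b • Pi.single i 1) * U =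
      a • (Uᵀ * diagonal c * U) + vecMulVec (b • U i) (U i) := by
  simp only [transpose_mul_diagonal_mul_eq_sum, Pi.add_apply, Pi.smul_apply, add_smul,
    Finset.sum_add_distrib, Finset.smul_sum, smul_smul, smul_eq_mul, Pi.single_apply]
  simp [smul_vecMulVec]

theorem dotProduct_transpose_mul_diagonal_mul_mulVec [Fintype κ] (c : ι → R) (x : κ → R) :
    x ⬝ᵥ (Uᵀ * diagonal c * U) *ᵥ x = ∑ i, c i * (U *ᵥ x) i ^ 2 := by
  rw [← mulVec_mulVec, ← mulVec_mulVec, dotProduct_mulVec, vecMul_transpose]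
  simp only [dotProduct, mulVec_diagonal, sq]
  exact Finset.sum_congr rfl fun i _ => by ring

end Gram

section DOptimalDesign
variable {ι κ : Type*} [Fintype ι] [DecidableEq ι] [Fintype κ] [DecidableEq κ]
  (U : Matrix ι κ ℝ)

theorem exists_isMaxOn_det_transpose_mul_diagonal_mul [Nonempty ι]
    (hU : Function.Injective U.mulVec) :
    ∃ c ∈ stdSimplex ℝ ι, IsMaxOn (fun c => (Uᵀ * diagonal c * U).det) (stdSimplex ℝ ι) c ∧
      0 < (Uᵀ * diagonal c * U).det := by
  let w : ι → ℝ := fun _ => (Fintype.card ι : ℝ)⁻¹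
  have hw : w ∈ stdSimplex ℝ ι := ⟨fun _ => by positivity, by simp [w]⟩
  have hcont : Continuous fun c : ι → ℝ => (Uᵀ * diagonal c * U).det := by fun_prop
  obtain ⟨c, hc, hmax⟩ := (isCompact_stdSimplex ℝ ι).exists_isMaxOn ⟨w, hw⟩ hcont.continuousOn
  refine ⟨c, hc, hmax, lt_of_lt_of_le ?_ (hmax hw)⟩
  have hgram : Uᵀ * diagonal w * U = (Fintype.card ι : ℝ)⁻¹ • (Uᵀ * U) := by
    rw [← smul_one_eq_diagonal, Matrix.mul_smul, Matrix.mul_one, Matrix.smul_mul]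
  change 0 < (Uᵀ * diagonal w * U).det
  rw [hgram, det_smul]
  exact mul_pos (by positivity) (by simpa using (PosDef.conjTranspose_mul_self U hU).det_pos)

theorem dotProduct_inv_mulVec_le_card_of_isMaxOn {c : ι → ℝ} (hc : c ∈ stdSimplex ℝ ι)
    (hmax : IsMaxOn (fun c => (Uᵀ * diagonal c * U).det) (stdSimplex ℝ ι) c)
    (hdet : 0 < (Uᵀ * diagonal c * U).det) (i : ι) :
    U i ⬝ᵥ (Uᵀ * diagonal c * U)⁻¹ *ᵥ U i ≤ Fintype.card κ := by
  refine le_of_forall_one_sub_pow_mul_le_one fun t ht => ?_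
  have hmem : (1 - t) • c + t • Pi.single i 1 ∈ stdSimplex ℝ ι :=
    convex_stdSimplex ℝ ι hc (single_mem_stdSimplex ℝ i) (sub_nonneg.2 ht.2.le) ht.1.le
      (by ring)
  have hle : (Uᵀ * diagonal ((1 - t) • c + t • Pi.single i 1) * U).det ≤
      (Uᵀ * diagonal c * U).det := hmax hmem
  rw [transpose_mul_diagonal_smul_add_single_mul,
    det_smul_add_vecMulVec hdet.ne'.isUnit (sub_ne_zero.2 ht.2.ne'), mulVec_smul,
    dotProduct_smul, smul_eq_mul, mul_right_comm] at hle
  exact (mul_le_iff_le_one_left hdet).1 hle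

end DOptimalDesign

theorem dotProduct_vecMul_self {κ κ' R : Type*} [Fintype κ] [Fintype κ'] [CommRing R]
    (x : κ → R) (C : Matrix κ κ' R) : (x ᵥ* C) ⬝ᵥ (x ᵥ* C) = x ⬝ᵥ (C * Cᵀ) *ᵥ x := by
  rw [← mulVec_mulVec, dotProduct_mulVec, mulVec_transpose]

open scoped MatrixOrder in
theorem exists_eq_mul_transpose_dotProduct_self_le {ι η κ : Type*} [Fintype ι] [DecidableEq ι]
    [Fintype η] [Fintype κ] [DecidableEq κ] {M : Matrix ι η ℝ} {U : Matrix ι κ ℝ}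
    {V : Matrix η κ ℝ} (hM : M = U * Vᵀ) (hU : Function.Injective U.mulVec) {a : ℝ}
    (ha : ∀ i j, |M i j| ≤ a) :
    ∃ (A : Matrix ι κ ℝ) (B : Matrix η κ ℝ), M = A * Bᵀ ∧
      (∀ i, A i ⬝ᵥ A i ≤ Fintype.card κ) ∧ ∀ j, B j ⬝ᵥ B j ≤ a ^ 2 := by
  subst hM
  rcases isEmpty_or_nonempty ι with _ | _
  · have : Subsingleton (κ → ℝ) := hU.subsingleton
    exact ⟨U, V, rfl, isEmptyElim, fun j => by simp [Subsingleton.elim (V j) 0, sq_nonneg]⟩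
  obtain ⟨c, hc, hmax, hdet⟩ := exists_isMaxOn_det_transpose_mul_diagonal_mul U hU
  have hQ : (Uᵀ * diagonal c * U).PosSemidef := by
    simpa using (posSemidef_diagonal_iff.2 hc.1).conjTranspose_mul_mul_same U
  obtain ⟨T, hT⟩ := CStarAlgebra.nonneg_iff_eq_star_mul_self.mp hQ.nonneg
  rw [star_eq_conjTranspose, conjTranspose_eq_transpose_of_trivial] at hT
  have hTdet : IsUnit T.det := by
    rw [hT, det_mul, det_transpose] at hdet
    exact (mul_self_pos.1 hdet).isUnit
  refine ⟨U * T⁻¹, V * Tᵀ, ?_, fun i => ?_, fun j => ?_⟩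
  · rw [transpose_mul, transpose_transpose, Matrix.mul_assoc, ← Matrix.mul_assoc T⁻¹,
      nonsing_inv_mul _ hTdet, Matrix.one_mul]
  · rw [mul_apply_eq_vecMul, dotProduct_vecMul_self, transpose_nonsing_inv, ← mul_inv_rev,
      ← hT]
    exact dotProduct_inv_mulVec_le_card_of_isMaxOn U hc hmax hdet i
  · rw [mul_apply_eq_vecMul, dotProduct_vecMul_self, transpose_transpose, ← hT,
      dotProduct_transpose_mul_diagonal_mul_mulVec]
    calc ∑ i, c i * (U *ᵥ V j) i ^ 2 ≤ ∑ i, c i * a ^ 2 := by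
          refine Finset.sum_le_sum fun i _ => mul_le_mul_of_nonneg_left ?_ (hc.1 i)
          rw [← sq_abs]
          exact pow_le_pow_left₀ (abs_nonneg _) (ha i j) 2
      _ = a ^ 2 := by rw [← Finset.sum_mul, hc.2, one_mul]

end Matrix

section FinMatrix
variable {m n k : ℕ}

theorem rowNormMax_nonneg (U : Matrix (Fin m) (Fin k) ℝ) : 0 ≤ rowNormMax U :=
  Real.iSup_nonneg fun _ => Real.sqrt_nonneg _

theorem rowNormMax_le {U : Matrix (Fin m) (Fin k) ℝ} {a : ℝ} (ha : 0 ≤ a)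
    (h : ∀ i, U i ⬝ᵥ U i ≤ a ^ 2) : rowNormMax U ≤ a := by
  refine Real.iSup_le (fun i => ?_) ha
  rw [← Real.sqrt_sq ha]
  exact Real.sqrt_le_sqrt (by simpa [dotProduct, sq] using h i)

theorem maxNorm_le_of_eq_mul_transpose {M : Matrix (Fin m) (Fin n) ℝ}
    {U : Matrix (Fin m) (Fin k) ℝ} {V : Matrix (Fin n) (Fin k) ℝ} (h : M = U * Vᵀ) :
    maxNorm M ≤ rowNormMax U * rowNormMax V := by
  refine csInf_le ⟨0, ?_⟩ ⟨k, U, V, h, rfl⟩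
  rintro _ ⟨k, U, V, -, rfl⟩
  exact mul_nonneg (rowNormMax_nonneg U) (rowNormMax_nonneg V)

theorem supNorm_nonneg (M : Matrix (Fin m) (Fin n) ℝ) : 0 ≤ supNorm M :=
  Real.iSup_nonneg fun _ => Real.iSup_nonneg fun _ => abs_nonneg _

theorem abs_le_supNorm (M : Matrix (Fin m) (Fin n) ℝ) (i : Fin m) (j : Fin n) :
    |M i j| ≤ supNorm M :=
  (le_ciSup (Set.finite_range _).bddAbove j).trans
    (le_ciSup (f := fun i => ⨆ j, |M i j|) (Set.finite_range _).bddAbove i)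

end FinMatrix

/-- ‖M‖_max ≤ √(rank M)·‖M‖_∞. -/
theorem maxNorm_le_sqrt_rank_mul_supNorm {d1 d2 : ℕ} (M : Matrix (Fin d1) (Fin d2) ℝ) :
    maxNorm M ≤ Real.sqrt (M.rank : ℝ) * supNorm M := by
  obtain ⟨U, V, hUV, hU⟩ := exists_eq_mul_transpose_injective_mulVec M
  obtain ⟨A, B, hAB, hA, hB⟩ :=
    exists_eq_mul_transpose_dotProduct_self_le hUV hU (abs_le_supNorm M)
  have hA' : ∀ i, A i ⬝ᵥ A i ≤ Real.sqrt M.rank ^ 2 := by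
    simpa [Real.sq_sqrt (Nat.cast_nonneg _)] using hA
  calc maxNorm M ≤ rowNormMax A * rowNormMax B := maxNorm_le_of_eq_mul_transpose hAB
    _ ≤ Real.sqrt M.rank * supNorm M :=
      mul_le_mul (rowNormMax_le (Real.sqrt_nonneg _) hA') (rowNormMax_le (supNorm_nonneg M) hB)
        (rowNormMax_nonneg B) (Real.sqrt_nonneg _)
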